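/- arXiv:1604.07214 — 2 statements merged into one kernel-verified Lean document; each statement's English description precedes it below -/
import Mathlib

section
/- Let p > 1 be an integer, m ≥ 1, and x^1, ..., x^m non-negative integers. For every h with 0 ≤ h < x^1 ⊕_p ⋯ ⊕_p x^m, there exist non-negative integers y^1, ..., y^m with y^i ≤ x^i for all i, y^1 ⊕_p ⋯ ⊕_p y^m = h, the Hamming distance between (x^i) and (y^i) is less than min(p, m+1), and ord_p(∑_i (x^i - y^i)) = min_i ord_p(x^i - y^i). -/
/-- The `L`-th digit of `x` in base `p`. -/
def digit (p L x : ℕ) : ℕ := x / p ^ L % p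

/-- `p`-ary addition without carry of a finite family: the `L`-th `p`-ary digit
is the sum of the `L`-th digits mod `p` (iterated `⊕_p`). -/
def oplusSum {ι : Type*} (p : ℕ) (s : Finset ι) (f : ι → ℕ) : ℕ :=
  ∑ L ∈ Finset.range (∑ i ∈ s, f i + 1), (∑ i ∈ s, digit p L (f i)) % p * p ^ L

/-- `p`-adic order of a natural number, with `ord 0 = ∞`. -/
noncomputable def ordE (p x : ℕ) : ℕ∞ := if x = 0 then ⊤ else (padicValNat p x : ℕ∞)

/-!
Let `L` be the highest base-`p` digit at which `h` and `X = x¹ ⊕ ⋯ ⊕ xᵐ` differ, so `h_L < X_L`.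
Lower the `L`-th digits of the `xⁱ` by amounts `tᵢ` summing to `d = X_L - h_L < p` (so fewer than
`p` of them are nonzero), keep all higher digits, and rewrite the digits below `L` of one `xʲ`
with `tⱼ > 0` so that the carry-free sum has the low digits of `h`. Then `xⁱ - yⁱ = tᵢ pᴸ` for
`i ≠ j`, `xʲ - yʲ = tⱼ pᴸ + e` and `∑ (xⁱ - yⁱ) = d pᴸ + e` with `|e| < pᴸ`. As `0 < tⱼ, d < p`,
a power `pᵏ` divides `t pᴸ + e` iff `k ≤ L` and `pᵏ ∣ e`, so the sum and `xʲ - yʲ` have the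
same order, which is the minimum.
-/

open Finset

lemma Nat.sub_sub_mod_mod {S a p : ℕ} (ha : a ≤ S % p) : (S - (S % p - a)) % p = a := by
  rcases Nat.eq_zero_or_pos p with rfl | hp
  · simp only [Nat.mod_zero] at ha ⊢
    omega
  have hS : S - (S % p - a) = p * (S / p) + a := by have := Nat.div_add_mod S p; omega
  rw [hS, Nat.mul_add_mod, Nat.mod_eq_of_lt (ha.trans_lt (Nat.mod_lt S hp))]

lemma Nat.add_pred_mul_mod_add_mod {a p : ℕ} (T : ℕ) (ha : a < p) :
    ((a + (p - 1) * T) % p + T) % p = a := by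
  obtain ⟨q, rfl⟩ : ∃ q, p = q + 1 := Nat.exists_eq_succ_of_ne_zero (by omega)
  rw [Nat.mod_add_mod, Nat.add_sub_cancel, add_assoc, ← Nat.succ_mul, Nat.add_mul_mod_self_left,
    Nat.mod_eq_of_lt ha]

section Digits

variable {p : ℕ}

lemma digit_lt (hp : 0 < p) (L x : ℕ) : digit p L x < p := Nat.mod_lt _ hp

lemma digit_eq_zero_of_lt {L x : ℕ} (h : x < p ^ L) : digit p L x = 0 := by
  simp [digit, Nat.div_eq_of_lt h]

lemma digit_zero_of_lt {c : ℕ} (h : c < p) : digit p 0 c = c := by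
  simp [digit, Nat.mod_eq_of_lt h]

lemma digit_eq_digit_div_pow {K ℓ : ℕ} (x : ℕ) (h : K ≤ ℓ) :
    digit p ℓ x = digit p (ℓ - K) (x / p ^ K) := by
  rw [digit, digit, Nat.div_div_eq_div_mul, ← pow_add, Nat.add_sub_cancel' h]

lemma digit_mod_pow {K ℓ : ℕ} (x : ℕ) (h : ℓ < K) : digit p ℓ (x % p ^ K) = digit p ℓ x := by
  rw [digit, digit, ← Nat.mod_mul_right_div_self, ← Nat.mod_mul_right_div_self x, ← pow_succ,
    Nat.mod_mod_of_dvd _ (pow_dvd_pow p h)]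

lemma digit_mul_pow_add {K q b : ℕ} (hb : b < p ^ K) (ℓ : ℕ) :
    digit p ℓ (q * p ^ K + b) = if ℓ < K then digit p ℓ b else digit p (ℓ - K) q := by
  split_ifs with h
  · rw [← digit_mod_pow _ h, Nat.mul_add_mod_of_lt hb]
  · rw [digit_eq_digit_div_pow _ (not_lt.1 h), mul_comm, Nat.mul_add_div (Nat.zero_lt_of_lt hb),
      Nat.div_eq_of_lt hb, add_zero]

lemma mod_pow_eq_sum_digit (x M : ℕ) : x % p ^ M = ∑ ℓ ∈ range M, digit p ℓ x * p ^ ℓ := by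
  induction M with
  | zero => simp [Nat.mod_one]
  | succ M ih => rw [Nat.mod_pow_succ, ih, sum_range_succ, digit, mul_comm (p ^ M)]

lemma digit_ext (hp : 1 < p) {a b : ℕ} (h : ∀ ℓ, digit p ℓ a = digit p ℓ b) : a = b := by
  have hM : a < p ^ (a + b) ∧ b < p ^ (a + b) := by
    constructor <;> exact lt_of_le_of_lt (by omega) (Nat.lt_pow_self hp)
  generalize a + b = M at hM
  rw [← Nat.mod_eq_of_lt hM.1, ← Nat.mod_eq_of_lt hM.2, mod_pow_eq_sum_digit,
    mod_pow_eq_sum_digit]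
  simp only [h]

lemma sum_mul_pow_lt {c : ℕ → ℕ} (hc : ∀ ℓ, c ℓ < p) (M : ℕ) :
    ∑ ℓ ∈ range M, c ℓ * p ^ ℓ < p ^ M := by
  induction M with
  | zero => simp
  | succ M ih =>
    rw [sum_range_succ, pow_succ]
    have := hc M
    nlinarith [Nat.zero_le (p ^ M)]

lemma digit_sum_mul_pow {c : ℕ → ℕ} (hc : ∀ ℓ, c ℓ < p) (M L : ℕ) :
    digit p L (∑ ℓ ∈ range M, c ℓ * p ^ ℓ) = if L < M then c L else 0 := by
  induction M with
  | zero => simp [digit]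
  | succ M ih =>
    rw [sum_range_succ, add_comm, digit_mul_pow_add (sum_mul_pow_lt hc M), ih]
    rcases lt_trichotomy L M with h | rfl | h
    · simp [h, h.trans (Nat.lt_succ_self M)]
    · simp [digit_zero_of_lt (hc L)]
    · rw [digit_eq_zero_of_lt ((hc M).trans_le (Nat.le_self_pow (by omega) p))]
      simp [h.not_gt, show ¬ L < M + 1 by omega]

lemma exists_lt_pow_digit_eq (c : ℕ → ℕ) (hc : ∀ ℓ, c ℓ < p) (L : ℕ) :
    ∃ B < p ^ L, ∀ ℓ < L, digit p ℓ B = c ℓ :=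
  ⟨_, sum_mul_pow_lt hc L, fun ℓ hℓ => by rw [digit_sum_mul_pow hc, if_pos hℓ]⟩

lemma digit_oplusSum (hp : 1 < p) {ι : Type*} (s : Finset ι) (f : ι → ℕ) (L : ℕ) :
    digit p L (oplusSum p s f) = (∑ i ∈ s, digit p L (f i)) % p := by
  rw [oplusSum, digit_sum_mul_pow (fun ℓ => Nat.mod_lt _ (by omega))]
  split_ifs with hL
  · rfl
  · rw [sum_eq_zero fun i hi => digit_eq_zero_of_lt ?_, Nat.zero_mod]
    calc f i ≤ ∑ i ∈ s, f i := single_le_sum (fun _ _ => Nat.zero_le _) hi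
      _ < L := by omega
      _ < p ^ L := Nat.lt_pow_self hp

lemma exists_digit_lt_of_lt (hp : 1 < p) {n X : ℕ} (hlt : n < X) :
    ∃ L, digit p L n < digit p L X ∧ ∀ ℓ, L < ℓ → digit p ℓ n = digit p ℓ X := by
  have hex : ∃ K, n / p ^ K = X / p ^ K := ⟨X, by
    rw [Nat.div_eq_of_lt (hlt.trans (Nat.lt_pow_self hp)), Nat.div_eq_of_lt (Nat.lt_pow_self hp)]⟩
  obtain ⟨L, hL⟩ : ∃ L, Nat.find hex = L + 1 := Nat.exists_eq_succ_of_ne_zero fun h0 => by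
    have := Nat.find_spec hex
    simp only [h0, pow_zero, Nat.div_one] at this
    omega
  have hhigh : n / p ^ (L + 1) = X / p ^ (L + 1) := hL ▸ Nat.find_spec hex
  have hne : n / p ^ L ≠ X / p ^ L := Nat.find_min hex (by omega)
  refine ⟨L, ?_, fun ℓ hℓ => by
    rw [digit_eq_digit_div_pow n hℓ, digit_eq_digit_div_pow X hℓ, hhigh]⟩
  have hle : n / p ^ L ≤ X / p ^ L := Nat.div_le_div_right hlt.le
  have hn := Nat.div_add_mod (n / p ^ L) p
  have hX := Nat.div_add_mod (X / p ^ L) p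
  rw [Nat.div_div_eq_div_mul, ← pow_succ, hhigh] at hn
  rw [Nat.div_div_eq_div_mul, ← pow_succ] at hX
  unfold digit
  generalize n / p ^ L = a, X / p ^ L = b, X / p ^ (L + 1) = c at *
  omega

end Digits

section LowerDigit

/-- For `t ≤ digit p L x` and `b < p ^ L`: `x` with `t` subtracted from its `L`-th digit and its
digits below `L` replaced by those of `b`. -/
def lowerDigit (p L t b x : ℕ) : ℕ := (x / p ^ L - t) * p ^ L + b

variable {p L t b x : ℕ}

lemma sub_div_and_sub_mod_of_le_mod {n : ℕ} (hp : 0 < p) (ht : t ≤ n % p) :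
    (n - t) / p = n / p ∧ (n - t) % p = n % p - t := by
  have hlt : n % p - t < p := (Nat.sub_le _ _).trans_lt (Nat.mod_lt n hp)
  have hn : n - t = p * (n / p) + (n % p - t) := by have := Nat.div_add_mod n p; omega
  rw [hn, Nat.mul_add_div hp, Nat.div_eq_of_lt hlt, Nat.mul_add_mod, Nat.mod_eq_of_lt hlt]
  simp

lemma digit_lowerDigit (hp : 0 < p) (ht : t ≤ digit p L x) (hb : b < p ^ L) (ℓ : ℕ) :
    digit p ℓ (lowerDigit p L t b x) =
      if ℓ < L then digit p ℓ b else if ℓ = L then digit p L x - t else digit p ℓ x := by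
  obtain ⟨hdiv, hmod⟩ := sub_div_and_sub_mod_of_le_mod hp ht
  rw [lowerDigit, digit_mul_pow_add hb]
  split_ifs with hlt heq
  · rfl
  · subst heq
    simpa [digit] using hmod
  · have hℓ : 1 ≤ ℓ - L := by omega
    rw [digit_eq_digit_div_pow x (not_lt.1 hlt), digit_eq_digit_div_pow _ hℓ,
      digit_eq_digit_div_pow (x / p ^ L) hℓ, pow_one, hdiv]

lemma lowerDigit_add (ht : t ≤ x / p ^ L) :
    lowerDigit p L t b x + t * p ^ L + x % p ^ L = x + b := by
  have hx := Nat.div_add_mod x (p ^ L)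
  have htP := Nat.mul_le_mul_right (p ^ L) ht
  rw [lowerDigit, Nat.sub_mul, mul_comm (p ^ L)] at *
  omega

lemma lowerDigit_le (ht : t ≤ x / p ^ L) (hb : b < p ^ L) (h : 0 < t ∨ b ≤ x % p ^ L) :
    lowerDigit p L t b x ≤ x := by
  have hadd := lowerDigit_add (b := b) ht
  generalize x % p ^ L = r at *
  rcases h with h | h
  · have := Nat.le_mul_of_pos_left (p ^ L) h
    omega
  · omega

lemma lowerDigit_zero_mod_pow : lowerDigit p L 0 (x % p ^ L) x = x := by
  simp [lowerDigit, Nat.div_add_mod']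

end LowerDigit

section Valuation

variable {p : ℕ}

lemma natCast_le_ordE_iff (hp : p ≠ 1) {k x : ℕ} : (k : ℕ∞) ≤ ordE p x ↔ p ^ k ∣ x := by
  unfold ordE
  split_ifs with hx
  · simp [hx]
  · rw [Nat.cast_le, Nat.pow_dvd_iff_le_padicValNat hp hx]

lemma ordE_sum_eq_iInf_of_dvd {ι : Type*} [Fintype ι] (hp : p ≠ 1) {f : ι → ℕ}
    (h : ∀ k, p ^ k ∣ ∑ i, f i → ∀ i, p ^ k ∣ f i) :
    ordE p (∑ i, f i) = ⨅ i, ordE p (f i) := by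
  refine le_antisymm ?_ ?_ <;> refine ENat.forall_natCast_le_iff_le.1 fun k => ?_ <;>
    simp only [le_iInf_iff, natCast_le_ordE_iff hp]
  · exact h k
  · exact fun hk => dvd_sum fun i _ => hk i

lemma pow_dvd_mul_pow_add_iff {t L k : ℕ} {e : ℤ} (ht0 : 0 < t) (htp : t < p)
    (he : |e| < (p : ℤ) ^ L) :
    (p : ℤ) ^ k ∣ t * p ^ L + e ↔ k ≤ L ∧ (p : ℤ) ^ k ∣ e := by
  refine ⟨fun hk => ?_, fun ⟨hkL, hke⟩ => dvd_add ((pow_dvd_pow _ hkL).mul_left _) hke⟩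
  have hkL : k ≤ L := by
    by_contra! hLk
    have hsucc := (pow_dvd_pow (p : ℤ) hLk).trans hk
    obtain rfl : e = 0 := Int.eq_zero_of_abs_lt_dvd
      ((dvd_add_right (dvd_mul_left _ _)).1 ((pow_dvd_pow _ (Nat.le_succ L)).trans hsucc)) he
    rw [add_zero, pow_succ, mul_comm (t : ℤ)] at hsucc
    have := Int.le_of_dvd (by positivity) ((mul_dvd_mul_iff_left (by positivity)).1 hsucc)
    omega
  exact ⟨hkL, (dvd_add_right ((pow_dvd_pow _ hkL).mul_left _)).1 hk⟩

lemma ordE_sum_eq_iInf_of_eq_mul_pow_add {ι : Type*} [Fintype ι] [DecidableEq ι] (hp : 1 < p)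
    {f t : ι → ℕ} {L : ℕ} {j : ι} {e : ℤ}
    (hf : ∀ i, (f i : ℤ) = t i * p ^ L + if i = j then e else 0)
    (ht0 : 0 < ∑ i, t i) (htp : ∑ i, t i < p) (he : |e| < (p : ℤ) ^ L) :
    ordE p (∑ i, f i) = ⨅ i, ordE p (f i) := by
  refine ordE_sum_eq_iInf_of_dvd (by omega) fun k hk i => ?_
  have hsum : ((∑ i, f i : ℕ) : ℤ) = ((∑ i, t i : ℕ) : ℤ) * p ^ L + e := by
    push_cast
    simp [hf, sum_add_distrib, sum_mul]
  rw [← Int.natCast_dvd_natCast, hsum, Nat.cast_pow, pow_dvd_mul_pow_add_iff ht0 htp he] at hk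
  rw [← Int.natCast_dvd_natCast, hf, Nat.cast_pow]
  exact dvd_add ((pow_dvd_pow _ hk.1).mul_left _) (by split_ifs <;> simp [hk.2])

end Valuation

section Counting

variable {ι : Type*}

lemma exists_le_sum_eq [DecidableEq ι] (s : Finset ι) (a : ι → ℕ) {d : ℕ}
    (hd : d ≤ ∑ i ∈ s, a i) : ∃ t ≤ a, ∑ i ∈ s, t i = d := by
  induction d with
  | zero => exact ⟨0, fun i => Nat.zero_le _, by simp⟩
  | succ d ih =>
    obtain ⟨t, hta, hts⟩ := ih (by omega)
    obtain ⟨i, hi, hlt⟩ := exists_lt_of_sum_lt (hts ▸ (by omega : d < ∑ i ∈ s, a i))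
    refine ⟨t + Pi.single i 1, fun k => ?_, ?_⟩
    · rcases eq_or_ne k i with rfl | hk
      · simpa using hlt
      · simpa [hk] using hta k
    · simp only [Pi.add_apply]
      rw [sum_add_distrib, hts, sum_pi_single', if_pos hi]

lemma card_filter_ne_zero_le_sum (s : Finset ι) (t : ι → ℕ) :
    #{i ∈ s | t i ≠ 0} ≤ ∑ i ∈ s, t i :=
  calc #{i ∈ s | t i ≠ 0} ≤ ∑ i ∈ s with t i ≠ 0, t i := by
        simpa using card_nsmul_le_sum _ t 1 fun i hi => Nat.one_le_iff_ne_zero.2 (mem_filter.1 hi).2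
    _ ≤ ∑ i ∈ s, t i := sum_le_sum_of_subset (filter_subset _ _)

end Counting

section LowerDigits

variable {ι : Type*} [DecidableEq ι] {p L B : ℕ} {t x : ι → ℕ} {j : ι}

def lowerDigits (p L : ℕ) (t : ι → ℕ) (j : ι) (B : ℕ) (x : ι → ℕ) (i : ι) : ℕ :=
  lowerDigit p L (t i) (if i = j then B else x i % p ^ L) (x i)

lemma ite_lt_pow (hB : B < p ^ L) (i : ι) : (if i = j then B else x i % p ^ L) < p ^ L := by
  split_ifs
  exacts [hB, Nat.mod_lt _ (Nat.zero_lt_of_lt hB)]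

lemma lowerDigits_le (ht : ∀ i, t i ≤ digit p L (x i)) (htj : t j ≠ 0) (hB : B < p ^ L) (i : ι) :
    lowerDigits p L t j B x i ≤ x i := by
  refine lowerDigit_le ((ht i).trans (Nat.mod_le _ _)) (ite_lt_pow hB i) ?_
  split_ifs with hij
  exacts [Or.inl (hij ▸ Nat.pos_of_ne_zero htj), Or.inr le_rfl]

lemma card_ne_lowerDigits_le [Fintype ι] (htj : t j ≠ 0) :
    #{i | x i ≠ lowerDigits p L t j B x i} ≤ ∑ i, t i := by
  refine (card_le_card fun i => ?_).trans (card_filter_ne_zero_le_sum univ t)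
  simp only [mem_filter, mem_univ, true_and]
  contrapose!
  intro hi
  have hij : i ≠ j := by rintro rfl; exact htj hi
  simp [lowerDigits, hij, hi, lowerDigit_zero_mod_pow]

lemma natCast_sub_lowerDigits (ht : ∀ i, t i ≤ digit p L (x i)) (htj : t j ≠ 0) (hB : B < p ^ L)
    (i : ι) :
    ((x i - lowerDigits p L t j B x i : ℕ) : ℤ) =
      t i * p ^ L + if i = j then ((x j % p ^ L : ℕ) - B : ℤ) else 0 := by
  have hadd : lowerDigits p L t j B x i + t i * p ^ L + x i % p ^ L =
      x i + if i = j then B else x i % p ^ L :=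
    lowerDigit_add ((ht i).trans (Nat.mod_le _ _))
  rw [Nat.cast_sub (lowerDigits_le ht htj hB i)]
  split_ifs at hadd ⊢ with hij
  · subst hij
    push_cast
    linarith [congrArg (Nat.cast : ℕ → ℤ) hadd]
  · linarith

lemma ordE_sum_sub_lowerDigits [Fintype ι] (hp : 1 < p) (ht : ∀ i, t i ≤ digit p L (x i))
    (htj : t j ≠ 0) (hB : B < p ^ L) (htp : ∑ i, t i < p) :
    ordE p (∑ i, (x i - lowerDigits p L t j B x i)) =
      ⨅ i, ordE p (x i - lowerDigits p L t j B x i) := by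
  refine ordE_sum_eq_iInf_of_eq_mul_pow_add hp (natCast_sub_lowerDigits ht htj hB)
    (Nat.pos_of_ne_zero fun h0 => htj (sum_eq_zero_iff.1 h0 j (mem_univ j))) htp ?_
  have hr : x j % p ^ L < p ^ L := Nat.mod_lt _ (by positivity)
  rw [abs_sub_lt_iff, ← Nat.cast_pow]
  generalize x j % p ^ L = r at hr
  omega

lemma oplusSum_lowerDigits [Fintype ι] (hp : 1 < p) {n : ℕ} (ht : ∀ i, t i ≤ digit p L (x i))
    (hB : B < p ^ L)
    (hlow : ∀ ℓ < L, (digit p ℓ B + ∑ i ∈ univ.erase j, digit p ℓ (x i)) % p = digit p ℓ n)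
    (hmid : (∑ i, (digit p L (x i) - t i)) % p = digit p L n)
    (hhigh : ∀ ℓ, L < ℓ → (∑ i, digit p ℓ (x i)) % p = digit p ℓ n) :
    oplusSum p univ (lowerDigits p L t j B x) = n := by
  refine digit_ext hp fun ℓ => ?_
  simp only [digit_oplusSum hp, lowerDigits, digit_lowerDigit (by omega) (ht _) (ite_lt_pow hB _)]
  rcases lt_trichotomy ℓ L with hℓ | rfl | hℓ
  · simp only [hℓ, if_true]
    rw [← add_sum_erase _ _ (mem_univ j), if_pos rfl, ← hlow ℓ hℓ]
    congr 2
    exact sum_congr rfl fun i hi => by rw [if_neg (ne_of_mem_erase hi), digit_mod_pow _ hℓ]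
  · simpa using hmid
  · simpa [hℓ.not_gt, hℓ.ne'] using hhigh ℓ hℓ

end LowerDigits

theorem stmt2_general (p m : ℕ) (hp : 1 < p) (xs : Fin m → ℕ) (h : ℕ)
    (hh : h < oplusSum p Finset.univ xs) :
    ∃ ys : Fin m → ℕ, (∀ i, ys i ≤ xs i) ∧ oplusSum p Finset.univ ys = h ∧
      (Finset.univ.filter fun i => xs i ≠ ys i).card < min p (m + 1) ∧
      ordE p (∑ i, (xs i - ys i)) = ⨅ i, ordE p (xs i - ys i) := by
  classical
  obtain ⟨L, hL, hhigh⟩ := exists_digit_lt_of_lt hp hh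
  simp only [digit_oplusSum hp] at hL hhigh
  set S := ∑ i, digit p L (xs i)
  have hSp : S % p < p := Nat.mod_lt S (by omega)
  obtain ⟨t, hta, htd⟩ := exists_le_sum_eq univ (fun i => digit p L (xs i))
    (d := S % p - digit p L h) ((Nat.sub_le _ _).trans (Nat.mod_le _ _))
  obtain ⟨j, -, htj⟩ := exists_ne_zero_of_sum_ne_zero (htd.trans_ne (by omega))
  obtain ⟨B, hB, hBdig⟩ := exists_lt_pow_digit_eq
    (fun ℓ => (digit p ℓ h + (p - 1) * ∑ i ∈ univ.erase j, digit p ℓ (xs i)) % p)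
    (fun ℓ => Nat.mod_lt _ (by omega)) L
  refine ⟨lowerDigits p L t j B xs, lowerDigits_le hta htj hB, ?_, ?_,
    ordE_sum_sub_lowerDigits hp hta htj hB (by omega)⟩
  · refine oplusSum_lowerDigits hp hta hB (fun ℓ hℓ => ?_) ?_ fun ℓ hℓ => (hhigh ℓ hℓ).symm
    · rw [hBdig ℓ hℓ]
      exact Nat.add_pred_mul_mod_add_mod _ (digit_lt (by omega) ℓ h)
    · rw [sum_tsub_distrib _ fun i _ => hta i, htd]
      exact Nat.sub_sub_mod_mod hL.le
  · exact lt_min ((card_ne_lowerDigits_le htj).trans_lt (by omega))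
      ((card_filter_le _ _).trans_lt (by simp))

theorem stmt2 (p m : ℕ) (hp : 1 < p) (hm : 1 ≤ m) (xs : Fin m → ℕ) (h : ℕ)
    (hh : h < oplusSum p Finset.univ xs) :
    ∃ ys : Fin m → ℕ, (∀ i, ys i ≤ xs i) ∧ oplusSum p Finset.univ ys = h ∧
      (Finset.univ.filter fun i => xs i ≠ ys i).card < min p (m + 1) ∧
      ordE p (∑ i, (xs i - ys i)) = ⨅ i, ordE p (xs i - ys i) :=
  stmt2_general p m hp xs h hh
end

section
/- Let p > 1 be an integer, X a finite set of distinct non-negative integers, x ∈ X with x ≥ p^H, x − p^H ∉ X, and Y = X ∪ {x − p^H} \ {x}. Then for every L ≤ H, h_L(Y) − h_L(X) = −p^{H−L}, and for every L ≥ H+1, h_L(Y) − h_L(X) = |X_{x mod p^L}| − |X_{(x − p^H) mod p^L}| − δ − 1, where X_R = |{x' ∈ X : x' ≡ R (mod p^L)}|, and δ = 1 if digits H, H+1, ..., L−1 of x in base p are all zero, and δ = 0 otherwise. -/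
/-- `hL p L X` is the number of hooks of `λ(X)` with length divisible by `p^L`:
hooks of `λ(X)` correspond bijectively to pairs `(x, y)` with `x ∈ X`, `0 ≤ y < x`,
`y ∉ X`, with hook length `x - y`. -/
def hL (p L : ℕ) (X : Finset ℕ) : ℕ :=
  ∑ x ∈ X, ((Finset.range x).filter fun y => y ∉ X ∧ p ^ L ∣ x - y).card

/-!
A hook of length divisible by `q = p ^ L` ending at the bead `z` is a non-bead `y < z` with
`y ≡ z [MOD q]`: of the `z / q` candidates, those that are beads are lost. Hence inserting a new
bead `a` changes `hL` by `a / q - #{z ∈ Z | z ≡ a [MOD q]}`: `a` contributes its own hooks, and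
every larger bead in the residue class of `a` loses the hook to `a`. Moving `x` to `x - p ^ H` is
an erasure followed by an insertion, and what remains is base-`p` arithmetic of `x - p ^ H`: for
`L ≤ H` its residue mod `p ^ L` is that of `x` and its quotient drops by `p ^ (H - L)`; for
`L > H` the residue changes, and the quotient drops by one exactly when the digits `H, …, L - 1`
of `x` vanish.
-/

open Finset

lemma card_filter_range_dvd_sub (q z : ℕ) : #{y ∈ range z | q ∣ z - y} = z / q := by
  rw [← Nat.Ioc_filter_dvd_card_eq_div]
  refine card_nbij' (z - ·) (z - ·) ?_ ?_ ?_ ?_ <;> intro y hy <;>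
    simp only [coe_filter, Set.mem_ofPred_eq, mem_range, mem_Ioc] at hy ⊢
  · exact ⟨by omega, hy.2⟩
  · exact ⟨by omega, by rw [Nat.sub_sub_self hy.1.2]; exact hy.2⟩
  · omega
  · omega

lemma card_filter_range_notMem_add_card_filter_modEq (q a : ℕ) (Z : Finset ℕ) :
    #{y ∈ range a | y ∉ Z ∧ q ∣ a - y} + #{y ∈ Z | y < a ∧ y % q = a % q} = a / q := by
  have h_notMem : {y ∈ range a | y ∉ Z ∧ q ∣ a - y}
      = {y ∈ {y ∈ range a | q ∣ a - y} | y ∉ Z} := by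
    rw [filter_filter]
    exact filter_congr fun y _ => and_comm
  have h_mem :
      {y ∈ Z | y < a ∧ y % q = a % q} = {y ∈ {y ∈ range a | q ∣ a - y} | ¬y ∉ Z} := by
    ext y
    simp only [mem_filter, mem_range, not_not]
    constructor
    · rintro ⟨hyZ, hya, hmod⟩
      exact ⟨⟨hya, (Nat.modEq_iff_dvd' hya.le).mp hmod⟩, hyZ⟩
    · rintro ⟨⟨hya, hdvd⟩, hyZ⟩
      exact ⟨hyZ, hya, (Nat.modEq_iff_dvd' hya.le).mpr hdvd⟩
  rw [h_notMem, h_mem, card_filter_add_card_filter_not, card_filter_range_dvd_sub]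

lemma card_filter_range_notMem_insert_add_ite (q a z : ℕ) {Z : Finset ℕ} (ha : a ∉ Z) :
    #{y ∈ range z | y ∉ insert a Z ∧ q ∣ z - y} + (if a < z ∧ a % q = z % q then 1 else 0)
      = #{y ∈ range z | y ∉ Z ∧ q ∣ z - y} := by
  have h_erase : {y ∈ range z | y ∉ insert a Z ∧ q ∣ z - y}
      = {y ∈ range z | y ∉ Z ∧ q ∣ z - y}.erase a := by
    ext y
    simp only [mem_erase, mem_filter, mem_insert, not_or]
    tauto
  have h_mem : a ∈ {y ∈ range z | y ∉ Z ∧ q ∣ z - y} ↔ a < z ∧ a % q = z % q := by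
    simp only [mem_filter, mem_range, ha, not_false_eq_true, true_and]
    exact and_congr_right fun haz => (Nat.modEq_iff_dvd' haz.le).symm
  rw [h_erase, card_erase_eq_ite, if_congr h_mem rfl rfl]
  split_ifs with h
  · exact Nat.sub_add_cancel (card_pos.mpr ⟨a, h_mem.mpr h⟩)
  · rfl

lemma card_filter_lt_add_card_filter_gt {α : Type*} [LinearOrder α] {a : α} {Z : Finset α}
    (ha : a ∉ Z) (P : α → Prop) [DecidablePred P] :
    #{z ∈ Z | z < a ∧ P z} + #{z ∈ Z | a < z ∧ P z} = #{z ∈ Z | P z} := by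
  rw [← card_union_of_disjoint (disjoint_filter.mpr fun _ _ h h' => lt_asymm h.1 h'.1),
    ← filter_or]
  refine congrArg card (filter_congr fun z hz => ?_)
  have hza : z ≠ a := fun h => ha (h ▸ hz)
  rw [← or_and_right, and_iff_right_of_imp fun _ => lt_or_gt_of_ne hza]

lemma hL_insert (p L a : ℕ) {Z : Finset ℕ} (ha : a ∉ Z) :
    (hL p L (insert a Z) : ℤ)
      = hL p L Z + (a / p ^ L : ℕ) - #{z ∈ Z | z % p ^ L = a % p ^ L} := by
  unfold hL
  have h_new : #{y ∈ range a | y ∉ insert a Z ∧ p ^ L ∣ a - y}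
      = #{y ∈ range a | y ∉ Z ∧ p ^ L ∣ a - y} := by
    refine congrArg card (filter_congr fun y hy => ?_)
    simp [(mem_range.mp hy).ne]
  have h_old := sum_congr rfl fun z (_ : z ∈ Z) =>
    card_filter_range_notMem_insert_add_ite (p ^ L) a z ha
  rw [sum_add_distrib, ← card_filter] at h_old
  have h_a := card_filter_range_notMem_add_card_filter_modEq (p ^ L) a Z
  have h_split := card_filter_lt_add_card_filter_gt ha (· % p ^ L = a % p ^ L)
  simp only [eq_comm (a := a % p ^ L)] at h_old
  rw [sum_insert ha, h_new]
  omega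

lemma card_filter_erase_add_ite {α : Type*} [DecidableEq α] {a : α} {Z : Finset α}
    (ha : a ∈ Z) (P : α → Prop) [DecidablePred P] :
    #{z ∈ Z.erase a | P z} + (if P a then 1 else 0) = #{z ∈ Z | P z} := by
  rw [filter_erase, card_erase_eq_ite]
  split_ifs with hmem hP hP
  · exact Nat.sub_add_cancel (card_pos.mpr ⟨a, hmem⟩)
  · exact absurd (mem_filter.mp hmem).2 hP
  · exact absurd (mem_filter.mpr ⟨ha, hP⟩) hmem
  · rfl

lemma hL_insert_erase (p L : ℕ) {a b : ℕ} {Z : Finset ℕ} (ha : a ∈ Z) (hb : b ∉ Z) :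
    (hL p L (insert b (Z.erase a)) : ℤ) = hL p L Z + (b / p ^ L : ℕ) - (a / p ^ L : ℕ)
      + #{z ∈ Z | z % p ^ L = a % p ^ L} - #{z ∈ Z | z % p ^ L = b % p ^ L} - 1
      + (if a % p ^ L = b % p ^ L then 1 else 0) := by
  have h_Z := hL_insert p L a (notMem_erase a Z)
  rw [insert_erase ha] at h_Z
  have h_a := card_filter_erase_add_ite ha (· % p ^ L = a % p ^ L)
  have h_b := card_filter_erase_add_ite ha (· % p ^ L = b % p ^ L)
  simp only [if_true] at h_a
  rw [hL_insert p L b fun h => hb (mem_of_mem_erase h)]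
  split_ifs at h_b ⊢ <;> omega

lemma sub_div_add_ite_mod_lt {q n x : ℕ} (hq : 0 < q) (hnq : n ≤ q) (hnx : n ≤ x) :
    (x - n) / q + (if x % q < n then 1 else 0) = x / q := by
  have h_div_mod := Nat.div_add_mod x q
  have h_mod_lt := Nat.mod_lt x hq
  split_ifs with h
  · have hqx : q ≤ x := by
      by_contra! hxq
      rw [Nat.mod_eq_of_lt hxq] at h
      omega
    obtain ⟨A, hA⟩ : ∃ A, x / q = A + 1 :=
      Nat.exists_eq_add_one_of_ne_zero (Nat.div_pos hqx hq).ne'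
    rw [hA, mul_add, mul_one] at h_div_mod
    have : x - n = (q + x % q - n) + q * A := by omega
    rw [this, Nat.add_mul_div_left _ _ hq, Nat.div_eq_of_lt (by omega), hA]
    omega
  · have : x - n = (x % q - n) + q * (x / q) := by omega
    rw [this, Nat.add_mul_div_left _ _ hq, Nat.div_eq_of_lt (by omega)]
    omega

lemma sub_pow_div_pow_add {p H L x : ℕ} (hp : 0 < p) (hLH : L ≤ H) (hx : p ^ H ≤ x) :
    (x - p ^ H) / p ^ L + p ^ (H - L) = x / p ^ L := by
  have hpow : p ^ H = p ^ (H - L) * p ^ L := by rw [← pow_add, Nat.sub_add_cancel hLH]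
  conv_rhs => rw [← Nat.sub_add_cancel hx, hpow, Nat.add_mul_div_right _ _ (pow_pos hp L)]
  rw [hpow]

lemma sub_pow_mod_pow {p H L x : ℕ} (hLH : L ≤ H) (hx : p ^ H ≤ x) :
    (x - p ^ H) % p ^ L = x % p ^ L := by
  have hpow : p ^ H = p ^ L * p ^ (H - L) := by rw [← pow_add, Nat.add_sub_cancel' hLH]
  conv_rhs => rw [← Nat.sub_add_cancel hx, hpow, Nat.add_mul_mod_self_left]
  rw [hpow]

lemma mod_pow_ne_sub_pow_mod_pow {p H L x : ℕ} (hp : 1 < p) (hHL : H < L) (hx : p ^ H ≤ x) :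
    x % p ^ L ≠ (x - p ^ H) % p ^ L := by
  intro h
  have hdvd : p ^ L ∣ p ^ H := by
    have := Nat.dvd_of_mod_eq_zero (Nat.sub_mod_eq_zero_of_mod_eq h)
    rwa [Nat.sub_sub_self hx] at this
  exact absurd (Nat.le_of_dvd (pow_pos (by omega) H) hdvd) (Nat.pow_lt_pow_right hp hHL).not_ge

lemma digit_Ico_eq_zero_iff {p H L x : ℕ} (hp : 0 < p) (hHL : H ≤ L) :
    (∀ K ∈ Ico H L, digit p K x = 0) ↔ x % p ^ L < p ^ H := by
  induction L, hHL using Nat.le_induction with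
  | base => simpa using Nat.mod_lt x (pow_pos hp H)
  | succ L hHL ih =>
    rw [Nat.Ico_succ_right_eq_insert_Ico hHL, forall_mem_insert, ih, Nat.mod_pow_succ, digit]
    rcases Nat.eq_zero_or_pos (x / p ^ L % p) with h | h
    · simp [h]
    · simp only [h.ne', false_and, false_iff, not_lt]
      exact le_add_left ((Nat.pow_le_pow_right hp hHL).trans (Nat.le_mul_of_pos_right _ h))

theorem stmt13 (p H : ℕ) (hp : 1 < p) (X : Finset ℕ) (x : ℕ) (hx : x ∈ X)
    (hxg : p ^ H ≤ x) (hnot : x - p ^ H ∉ X)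
    (Y : Finset ℕ) (hY : Y = insert (x - p ^ H) (X.erase x)) :
    (∀ L ≤ H, (hL p L Y : ℤ) = (hL p L X : ℤ) - p ^ (H - L)) ∧
      (∀ L, H + 1 ≤ L →
        (hL p L Y : ℤ) = (hL p L X : ℤ)
          + ((X.filter fun z => z % p ^ L = x % p ^ L).card : ℤ)
          - ((X.filter fun z => z % p ^ L = (x - p ^ H) % p ^ L).card : ℤ)
          - (if ∀ K ∈ Finset.Ico H L, digit p K x = 0 then 1 else 0) - 1) := by
  have hp0 : 0 < p := by omega
  subst hY
  refine ⟨fun L hLH => ?_, fun L hHL => ?_⟩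
  · have h_div := sub_pow_div_pow_add hp0 hLH hxg
    rw [hL_insert_erase p L hx hnot, sub_pow_mod_pow hLH hxg, if_pos rfl, ← h_div]
    push_cast
    ring
  · have h_div := sub_div_add_ite_mod_lt (x := x) (pow_pos hp0 L)
      (Nat.pow_le_pow_right hp0 (by omega : H ≤ L)) hxg
    rw [hL_insert_erase p L hx hnot, if_neg (mod_pow_ne_sub_pow_mod_pow hp (by omega) hxg),
      if_congr (digit_Ico_eq_zero_iff hp0 (by omega : H ≤ L)) rfl rfl, ← h_div]
    push_cast
    ring
end
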